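/- arXiv:2506.13379 — 3 statements merged into one kernel-verified Lean document; each statement's English description precedes it below -/
import Mathlib

section
/- Consider four runners on a circular track ℝ/ℤ with velocities 1, 3, 4, 6 and starting positions s_1 = 0, s_3 ∈ [-1/20, 1/20], s_4 = 0, s_6 = 1/2. Then for every time t ∈ ℝ there exists a runner i ∈ {1, 3, 4, 6} such that dist(v_i·t + s_i, ℤ) ≤ 1/5. -/
/-- Tightness of the velocity vector (1, 3, 4, 6) for the shifted
Lonely Runner Conjecture: with starting positions s₁ = 0, s₃ ∈ [-1/20, 1/20],
s₄ = 0, s₆ = 1/2, at every time some runner is within 1/5 of an integer. -/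
theorem stmt_1 (s₃ : ℝ) (hs₃ : s₃ ∈ Set.Icc (-(1/20) : ℝ) (1/20)) (t : ℝ) :
    (∃ k : ℤ, |1 * t + 0 - (k : ℝ)| ≤ 1/5) ∨
    (∃ k : ℤ, |3 * t + s₃ - (k : ℝ)| ≤ 1/5) ∨
    (∃ k : ℤ, |4 * t + 0 - (k : ℝ)| ≤ 1/5) ∨
    (∃ k : ℤ, |6 * t + 1/2 - (k : ℝ)| ≤ 1/5) := by
  obtain ⟨hs1, hs2⟩ := hs₃
  have hf0 := Int.fract_nonneg t
  have hf1 := Int.fract_lt_one t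
  set n := ⌊t⌋ with hn
  set x := Int.fract t with hx
  have ht : t = n + x := by rw [hx, Int.fract]; ring
  rcases le_or_gt x (1/5) with h | h
  · exact Or.inl ⟨n, by rw [abs_le, ht]; constructor <;> linarith⟩
  rcases le_or_gt x (3/10) with h2 | h2
  · exact Or.inr (Or.inr (Or.inl ⟨4*n+1, by rw [abs_le, ht]; push_cast; constructor <;> linarith⟩))
  rcases le_or_gt x (23/60) with h3 | h3
  · exact Or.inr (Or.inl ⟨3*n+1, by rw [abs_le, ht]; push_cast; constructor <;> linarith⟩)
  rcases le_or_gt x (9/20) with h4 | h4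
  · exact Or.inr (Or.inr (Or.inr ⟨6*n+3, by rw [abs_le, ht]; push_cast; constructor <;> linarith⟩))
  rcases le_or_gt x (11/20) with h5 | h5
  · exact Or.inr (Or.inr (Or.inl ⟨4*n+2, by rw [abs_le, ht]; push_cast; constructor <;> linarith⟩))
  rcases le_or_gt x (37/60) with h6 | h6
  · exact Or.inr (Or.inr (Or.inr ⟨6*n+4, by rw [abs_le, ht]; push_cast; constructor <;> linarith⟩))
  rcases le_or_gt x (7/10) with h7 | h7
  · exact Or.inr (Or.inl ⟨3*n+2, by rw [abs_le, ht]; push_cast; constructor <;> linarith⟩)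
  rcases le_or_gt x (4/5) with h8 | h8
  · exact Or.inr (Or.inr (Or.inl ⟨4*n+3, by rw [abs_le, ht]; push_cast; constructor <;> linarith⟩))
  · exact Or.inl ⟨n+1, by rw [abs_le, ht]; push_cast; constructor <;> linarith⟩
end

section
/- For every integer vector v = (v_1, ..., v_n) ∈ ℤ_{>0}^n with gcd(v_1, ..., v_n) = 1, there exist integer vectors u_1, ..., u_n ∈ ℤ^{n-1} in linear general position such that |det(U \ {u_i})| = v_i for every i. -/
/-!
Euclid's algorithm, run with integer transvections, carries `v` to `c • e_k` by a matrix `B` of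
determinant one. Then `v = adj B *ᵥ (c • e_k)` is `c` times the `k`-th column of `adj B`, so
`gcd v = 1` forces `c = ±1`. Up to sign, the entries of that column are the maximal minors of the
`d × (d + 1)` matrix formed by the rows of `B` other than `k`; its columns are the `u_j`.
-/

open Matrix

theorem Matrix.transvection_mulVec {n R : Type*} [Fintype n] [DecidableEq n] [CommRing R]
    (i j : n) (c : R) (w : n → R) :
    transvection i j c *ᵥ w = Function.update w i (w i + c * w j) := by
  ext a
  rcases eq_or_ne a i with rfl | ha
  · simp [transvection, add_mulVec, Matrix.single_mulVec]
  · simp [transvection, add_mulVec, Matrix.single_mulVec, ha]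

theorem Int.natAbs_emod_lt (a : ℤ) {b : ℤ} (hb : b ≠ 0) : (a % b).natAbs < b.natAbs := by
  have h0 := Int.emod_nonneg a hb
  have h1 := Int.emod_lt a hb
  omega

theorem Function.exists_eq_single_of_subsingleton_support {ι M : Type*} [DecidableEq ι] [Zero M]
    [Nonempty ι] {w : ι → M} (h : ∀ j k, w j ≠ 0 → w k ≠ 0 → j = k) :
    ∃ k c, w = Pi.single k c := by
  by_cases hw : ∃ k, w k ≠ 0
  · obtain ⟨k, hk⟩ := hw
    refine ⟨k, w k, funext fun i => ?_⟩
    rcases eq_or_ne i k with rfl | hik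
    · simp
    · simpa [hik] using not_imp_comm.mp (h i k · hk) hik
  · push Not at hw
    exact ⟨Classical.arbitrary ι, 0, funext fun i => by simp [hw]⟩

theorem Int.sum_natAbs_update_lt {ι : Type*} [Fintype ι] [DecidableEq ι] {w : ι → ℤ} {j : ι}
    {x : ℤ} (h : x.natAbs < (w j).natAbs) :
    ∑ i, (Function.update w j x i).natAbs < ∑ i, (w i).natAbs := by
  refine Finset.sum_lt_sum (fun i _ => ?_) ⟨j, Finset.mem_univ j, by simpa using h⟩
  rcases eq_or_ne i j with rfl | hij
  · simpa using h.le
  · simp [hij]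

theorem Matrix.exists_det_eq_one_mulVec_eq_single {ι : Type*} [Fintype ι] [DecidableEq ι]
    [Nonempty ι] (w : ι → ℤ) :
    ∃ B : Matrix ι ι ℤ, B.det = 1 ∧ ∃ k c, B *ᵥ w = Pi.single k c := by
  induction hN : ∑ i, (w i).natAbs using Nat.strong_induction_on generalizing w with
  | _ N ih =>
  by_cases h : ∃ j k, j ≠ k ∧ w j ≠ 0 ∧ w k ≠ 0 ∧ (w k).natAbs ≤ (w j).natAbs
  · obtain ⟨j, k, hjk, -, hk, hle⟩ := h
    set T := transvection j k (-(w j / w k)) with hTdef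
    have hT : T *ᵥ w = Function.update w j (w j % w k) := by
      rw [transvection_mulVec, Int.emod_def]
      congr 1
      ring
    have hlt : ∑ i, ((T *ᵥ w) i).natAbs < N := hN ▸ hT ▸
      Int.sum_natAbs_update_lt ((Int.natAbs_emod_lt _ hk).trans_le hle)
    obtain ⟨B, hB, k', c, hBw⟩ := ih _ hlt (T *ᵥ w) rfl
    exact ⟨B * T, by rw [det_mul, hB, hTdef, det_transvection_of_ne _ _ hjk, one_mul], k', c,
      by rw [← mulVec_mulVec, hBw]⟩
  · refine ⟨1, det_one, ?_⟩
    rw [one_mulVec]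
    refine Function.exists_eq_single_of_subsingleton_support fun j k hj hk => ?_
    by_contra hjk
    rcases le_total (w k).natAbs (w j).natAbs with hle | hle
    · exact h ⟨j, k, hjk, hj, hk, hle⟩
    · exact h ⟨k, j, Ne.symm hjk, hk, hj, hle⟩

theorem Matrix.adjugate_apply_mul_eq_of_mulVec_eq_single {ι R : Type*} [Fintype ι]
    [DecidableEq ι] [CommRing R] {B : Matrix ι ι R} (hB : B.det = 1) {w : ι → R} {k : ι} {c : R}
    (h : B *ᵥ w = Pi.single k c) (i : ι) : B.adjugate i k * c = w i := by
  have := congrFun (congrArg (B.adjugate *ᵥ ·) h) i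
  simpa [mulVec_mulVec, adjugate_mul, hB] using this.symm

theorem Int.natAbs_eq_one_of_dvd_of_gcd_eq_one {ι : Type*} {v : ι → ℕ} {s : Finset ι}
    (hgcd : s.gcd v = 1) {c : ℤ} (hc : ∀ i ∈ s, c ∣ v i) : c.natAbs = 1 :=
  Nat.dvd_one.mp (hgcd ▸ Finset.dvd_gcd fun i hi => Int.dvd_natCast.mp (hc i hi))

/-- Every primitive positive integer vector is the volume vector of
some lonely runner zonotope: there exist integer generators in linear general
position whose volume vector is the given vector. -/
theorem stmt_4 (d : ℕ) (v : Fin (d + 1) → ℕ) (hv : ∀ i, 0 < v i)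
    (hgcd : Finset.univ.gcd v = 1) :
    ∃ u : Fin (d + 1) → Fin d → ℤ,
      (∀ i : Fin (d + 1), (Matrix.of fun r c => u (i.succAbove c) r).det ≠ 0) ∧
      (∀ i : Fin (d + 1),
        (Matrix.of fun r c => u (i.succAbove c) r).det.natAbs = v i) := by
  obtain ⟨B, hB, k, c, hBv⟩ := exists_det_eq_one_mulVec_eq_single fun i => (v i : ℤ)
  have hcof := adjugate_apply_mul_eq_of_mulVec_eq_single hB hBv
  have hc : c.natAbs = 1 :=
    Int.natAbs_eq_one_of_dvd_of_gcd_eq_one hgcd fun i _ =>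
      ⟨B.adjugate i k, by rw [← hcof, mul_comm]⟩
  have hminor : ∀ i, (B.submatrix k.succAbove i.succAbove).det.natAbs = v i := by
    intro i
    have := congrArg Int.natAbs (hcof i)
    rwa [adjugate_fin_succ_eq_det_submatrix, Int.natAbs_mul, Int.natAbs_mul, hc, mul_one,
      Int.natAbs_pow, Int.natAbs_neg, Int.natAbs_one, one_pow, one_mul, Int.natAbs_natCast]
      at this
  refine ⟨fun j r => B (k.succAbove r) j, fun i h => (hv i).ne' ?_, hminor⟩
  rw [← hminor i]
  exact Int.natAbs_eq_zero.mpr h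
end

section
/- Let P be a rational polytope in ℝ^d with nonempty interior, let D be an upper bound for the denominator of μ(P), let ρ = r/s with r, s ∈ ℤ and s > 0, and let P⁺ = (ρ + 1/(2sD))·P. If μ(P) ≤ ρ, then μ(P⁺) < 1, and consequently P⁺ contains a dyadic fundamental domain (a fundamental domain of ℤ^d that is a finite union of dyadic voxels). -/
open Pointwise

/-- The covering radius of a set P ⊆ ℝ^d. -/
noncomputable def covRad (d : ℕ) (P : Set (Fin d → ℝ)) : ℝ :=
  sInf {ρ : ℝ | 0 < ρ ∧ ∀ x : Fin d → ℝ,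
    ∃ c ∈ P, ∃ z : Fin d → ℤ, x = ρ • c + fun i => (z i : ℝ)}

/-- The dyadic d-voxel of level ℓ with corner c/2^ℓ. -/
def dyadicVoxel (d : ℕ) (ℓ : ℕ) (c : Fin d → ℤ) : Set (Fin d → ℝ) :=
  {x | ∀ i, (c i : ℝ) / 2 ^ ℓ ≤ x i ∧ x i < ((c i : ℝ) + 1) / 2 ^ ℓ}

private def covSet (d : ℕ) (P : Set (Fin d → ℝ)) : Set ℝ :=
  {ρ : ℝ | 0 < ρ ∧ ∀ x : Fin d → ℝ,
    ∃ c ∈ P, ∃ z : Fin d → ℤ, x = ρ • c + fun i => (z i : ℝ)}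

private lemma covRad_def (d : ℕ) (P : Set (Fin d → ℝ)) :
    covRad d P = sInf (covSet d P) := rfl

private lemma covSet_mem_of_ball {d : ℕ} {P : Set (Fin d → ℝ)} {x₀ : Fin d → ℝ} {ε : ℝ}
    (hε : 0 < ε) (hball : ∀ y : Fin d → ℝ, (∀ i, |y i - x₀ i| < ε) → y ∈ P) :
    (2/ε) ∈ covSet d P := by
  have hρ₀pos : (0:ℝ) < 2/ε := by positivity
  refine ⟨hρ₀pos, fun x => ?_⟩
  refine ⟨fun i => (x i - ⌊x i - (2/ε) * x₀ i + 1⌋)/(2/ε), hball _ fun i => ?_,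
    fun i => ⌊x i - (2/ε) * x₀ i + 1⌋, funext fun i => ?_⟩
  · set u := x i - (2/ε) * x₀ i with hu
    have h1 : (⌊u + 1⌋ : ℝ) ≤ u + 1 := Int.floor_le _
    have h2 : u + 1 < ⌊u + 1⌋ + 1 := Int.lt_floor_add_one _
    have heq : (x i - (⌊u+1⌋:ℝ))/(2/ε) - x₀ i = (u - ⌊u+1⌋) * (ε/2) := by
      rw [hu]; field_simp; ring
    rw [heq, abs_mul, abs_of_pos (by positivity : (0:ℝ) < ε/2)]
    have habs : |u - (⌊u+1⌋:ℝ)| ≤ 1 := abs_le.2 ⟨by linarith, by linarith⟩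
    nlinarith
  · show x i = (2/ε) * ((x i - ⌊x i - (2/ε) * x₀ i + 1⌋)/(2/ε)) + (⌊x i - (2/ε) * x₀ i + 1⌋:ℝ)
    field_simp; ring

set_option maxHeartbeats 1000000 in
/-- Let P be a rational polytope with nonempty interior, D a
bound for the denominator of μ(P), ρ = r/s, and P⁺ = (ρ + 1/(2sD))·P. If
μ(P) ≤ ρ then μ(P⁺) < 1 and P⁺ contains a dyadic fundamental domain. -/
theorem stmt_16 (d m : ℕ) (A : Matrix (Fin m) (Fin d) ℚ) (b : Fin m → ℚ)
    (P : Set (Fin d → ℝ))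
    (hP : P = {x : Fin d → ℝ | ∀ i : Fin m, ∑ j, (A i j : ℝ) * x j ≤ (b i : ℝ)})
    (hcomp : IsCompact P) (hint : (interior P).Nonempty)
    (μP : ℚ) (hμ : covRad d P = (μP : ℝ))
    (D : ℕ) (hD : 0 < D) (hden : μP.den ≤ D)
    (r s : ℤ) (hs : 0 < s) (ρ : ℝ) (hρ : ρ = (r : ℝ) / (s : ℝ))
    (Pplus : Set (Fin d → ℝ))
    (hPplus : Pplus = (ρ + 1 / (2 * (s : ℝ) * (D : ℝ))) • P)
    (hle : covRad d P ≤ ρ) :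
    covRad d Pplus < 1 ∧
    ∃ S : Finset (ℕ × (Fin d → ℤ)),
      (⋃ p ∈ S, dyadicVoxel d p.1 p.2) ⊆ Pplus ∧
      ∀ x : Fin d → ℝ, ∃! y,
        y ∈ (⋃ p ∈ S, dyadicVoxel d p.1 p.2) ∧
        ∃ z : Fin d → ℤ, y = x + fun i => (z i : ℝ) := by
  classical
  -- Step A: a sup-norm ball inside P
  obtain ⟨x₀, hx₀⟩ := hint
  obtain ⟨ε, hε, hballm⟩ := Metric.isOpen_iff.1 isOpen_interior x₀ hx₀
  have hball : ∀ y : Fin d → ℝ, (∀ i, |y i - x₀ i| < ε) → y ∈ P := by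
    intro y hy
    refine interior_subset (hballm ?_)
    rw [Metric.mem_ball, dist_pi_lt_iff hε]
    intro i
    rw [Real.dist_eq]; exact hy i
  -- Step B: covSet P nonempty
  have hmem0 : (2/ε) ∈ covSet d P := covSet_mem_of_ball hε hball
  have hne : (covSet d P).Nonempty := ⟨_, hmem0⟩
  -- Step C: λ positive and > sInf covSet P
  set lam : ℝ := ρ + 1 / (2 * (s : ℝ) * (D : ℝ)) with hlam
  have hs' : (0:ℝ) < (s:ℝ) := by exact_mod_cast hs
  have hD' : (0:ℝ) < (D:ℝ) := by exact_mod_cast hD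
  have hη : (0:ℝ) < 1 / (2 * (s : ℝ) * (D : ℝ)) := by positivity
  rw [covRad_def] at hle
  have hρ0 : 0 ≤ ρ := le_trans (Real.sInf_nonneg (fun x hx => hx.1.le)) hle
  have hlampos : 0 < lam := by rw [hlam]; linarith
  have hsInflt : sInf (covSet d P) < lam := by
    rw [hlam]; linarith
  -- Step D: get α ∈ covSet P with α < lam
  obtain ⟨α, hα, hαlt⟩ := exists_lt_of_csInf_lt hne hsInflt
  -- Step E: λ₁ := α/lam ∈ covSet Pplus, λ₁ < 1
  set lam1 : ℝ := α / lam with hlam1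
  have hlam1pos : 0 < lam1 := div_pos hα.1 hlampos
  have hlam1lt : lam1 < 1 := (div_lt_one hlampos).2 hαlt
  have hlam1mem : lam1 ∈ covSet d Pplus := by
    refine ⟨hlam1pos, fun x => ?_⟩
    obtain ⟨c, hc, z, hx⟩ := hα.2 x
    refine ⟨lam • c, by rw [hPplus]; exact Set.smul_mem_smul_set hc, z, ?_⟩
    rw [hx]
    congr 1
    rw [smul_smul, hlam1, div_mul_cancel₀ _ (ne_of_gt hlampos)]
  -- Part 1
  have hbdd : BddBelow (covSet d Pplus) := ⟨0, fun x hx => hx.1.le⟩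
  have part1 : covRad d Pplus < 1 := by
    rw [covRad_def]
    exact lt_of_le_of_lt (csInf_le hbdd hlam1mem) hlam1lt
  refine ⟨part1, ?_⟩
  -- Step G: convexity
  have hconv : Convex ℝ P := by
    rw [hP, Set.setOf_forall]
    refine convex_iInter fun i => convex_halfSpace_le ⟨fun x y => ?_, fun c x => ?_⟩ _
    · simp [mul_add, Finset.sum_add_distrib]
    · simp only [Pi.smul_apply, smul_eq_mul, Finset.mul_sum]
      exact Finset.sum_congr rfl fun j _ => by ring
  have hconv2 : Convex ℝ Pplus := by rw [hPplus]; exact hconv.smul _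
  -- Step H: ball inside Pplus
  have hball2 : ∀ y : Fin d → ℝ, (∀ i, |y i - lam * x₀ i| < lam * ε) → y ∈ Pplus := by
    intro y hy
    rw [hPplus]
    refine Set.mem_smul_set.2 ⟨lam⁻¹ • y, hball _ fun i => ?_, smul_inv_smul₀ (ne_of_gt hlampos) y⟩
    show |lam⁻¹ * y i - x₀ i| < ε
    have heq : lam⁻¹ * y i - x₀ i = lam⁻¹ * (y i - lam * x₀ i) := by
      field_simp
    rw [heq, abs_mul, abs_of_pos (inv_pos.2 hlampos)]
    calc lam⁻¹ * |y i - lam * x₀ i| < lam⁻¹ * (lam * ε) :=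
          mul_lt_mul_of_pos_left (hy i) (inv_pos.2 hlampos)
      _ = ε := by field_simp
  -- Step I: slack lemma
  set t₀ : Fin d → ℝ := fun i => (1 - lam1) * (lam * x₀ i) with ht₀
  have h1l : 0 < 1 - lam1 := by linarith
  set δ : ℝ := (1 - lam1) * (lam * ε) with hδdef
  have hδ : 0 < δ := mul_pos h1l (mul_pos hlampos hε)
  have hslack : ∀ c ∈ Pplus, ∀ w : Fin d → ℝ, (∀ i, |w i - t₀ i| < δ) →
      (fun i => lam1 * c i + w i) ∈ Pplus := by
    intro c hc w hw
    have hq : (1 - lam1)⁻¹ • w ∈ Pplus := by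
      apply hball2
      intro i
      have heq : ((1 - lam1)⁻¹ • w) i - lam * x₀ i = (1 - lam1)⁻¹ * (w i - t₀ i) := by
        simp only [Pi.smul_apply, smul_eq_mul, ht₀]
        field_simp
      rw [heq, abs_mul, abs_of_pos (inv_pos.2 h1l)]
      calc (1 - lam1)⁻¹ * |w i - t₀ i| < (1 - lam1)⁻¹ * δ :=
            mul_lt_mul_of_pos_left (hw i) (inv_pos.2 h1l)
        _ = lam * ε := by rw [hδdef]; field_simp
    have hmem := hconv2 hc hq hlam1pos.le h1l.le (by ring)
    have hww : (1 - lam1) • ((1 - lam1)⁻¹ • w) = w := smul_inv_smul₀ (ne_of_gt h1l) w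
    rw [hww] at hmem
    have hfun : (fun i => lam1 * c i + w i) = lam1 • c + w := by
      funext i; simp [Pi.add_apply]
    rwa [hfun]
  -- Step J: choose the level ℓ
  obtain ⟨ℓ, hℓ⟩ := exists_pow_lt_of_lt_one hδ (by norm_num : (1/2:ℝ) < 1)
  have h2ℓ : (0:ℝ) < 2^ℓ := by positivity
  have hℓδ : (1:ℝ)/2^ℓ < δ := by rwa [div_pow, one_pow] at hℓ
  -- Step K: voxels touching λ₁·Pplus + t₀ are inside Pplus
  have hvox : ∀ (cm : Fin d → ℤ) (c : Fin d → ℝ), c ∈ Pplus →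
      (∀ i, (cm i : ℝ)/2^ℓ = lam1 * c i + t₀ i) → dyadicVoxel d ℓ cm ⊆ Pplus := by
    intro cm c hc hcorner x hx
    have hw : ∀ i, |(x i - lam1 * c i) - t₀ i| < δ := by
      intro i
      have h1 := (hx i).1
      have h2 := (hx i).2
      have h3 : ((cm i:ℝ)+1)/2^ℓ = (cm i:ℝ)/2^ℓ + 1/2^ℓ := add_div _ _ _
      have heq : x i - lam1 * c i - t₀ i = x i - (cm i:ℝ)/2^ℓ := by rw [hcorner i]; ring
      rw [heq, abs_lt]
      constructor
      · linarith
      · linarith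
    have hmem := hslack c hc (fun i => x i - lam1 * c i) hw
    have hxeq : (fun i => lam1 * c i + (x i - lam1 * c i)) = x := funext fun i => by ring
    rwa [hxeq] at hmem
  -- Step L: choose representatives
  set N : ℕ := 2^ℓ with hN
  have hNpos : 0 < N := pow_pos (by norm_num) ℓ
  have hNR : ((N:ℕ):ℝ) = 2^ℓ := by rw [hN]; push_cast; ring
  have hNZ : ((N:ℕ):ℤ) ≠ 0 := by exact_mod_cast hNpos.ne'
  choose cP hcP zf hzf using hlam1mem.2
  set xt : (Fin d → Fin N) → (Fin d → ℝ) :=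
    fun t => fun i => ((t i : ℕ) : ℝ)/2^ℓ - t₀ i with hxt
  set corner : (Fin d → Fin N) → (Fin d → ℤ) :=
    fun t => fun i => ((t i : ℕ) : ℤ) - (N:ℤ) * zf (xt t) i with hcornerdef
  have hcornerP : ∀ t : Fin d → Fin N, ∀ i,
      ((corner t i : ℤ) : ℝ)/2^ℓ = lam1 * cP (xt t) i + t₀ i := by
    intro t i
    have h := congrFun (hzf (xt t)) i
    have h' : ((t i : ℕ):ℝ)/2^ℓ - t₀ i = lam1 * cP (xt t) i + (zf (xt t) i : ℝ) := by
      simpa [hxt, Pi.add_apply, Pi.smul_apply, smul_eq_mul] using h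
    show ((((t i : ℕ) : ℤ) - (N:ℤ) * zf (xt t) i : ℤ) : ℝ)/2^ℓ = lam1 * cP (xt t) i + t₀ i
    push_cast
    rw [sub_div, hNR]
    have hzc : (2:ℝ)^ℓ * (zf (xt t) i : ℝ) / 2^ℓ = (zf (xt t) i : ℝ) := by
      field_simp
    rw [hzc]
    linarith
  set S : Finset (ℕ × (Fin d → ℤ)) :=
    Finset.image (fun t : Fin d → Fin N => ((ℓ, corner t) : ℕ × (Fin d → ℤ))) Finset.univ with hS
  refine ⟨S, ?_, ?_⟩
  · -- Step M: union ⊆ Pplus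
    intro x hx
    obtain ⟨p, hpS, hxp⟩ := Set.mem_iUnion₂.1 hx
    obtain ⟨t, -, rfl⟩ := Finset.mem_image.1 hpS
    exact hvox _ _ (hcP (xt t)) (hcornerP t) hxp
  · -- Step N: fundamental domain property
    intro x
    set a : Fin d → ℤ := fun i => ⌊(2:ℝ)^ℓ * x i⌋ with ha
    have hmod : ∀ i, 0 ≤ a i % (N:ℤ) ∧ a i % (N:ℤ) < (N:ℤ) := fun i =>
      ⟨Int.emod_nonneg _ hNZ, Int.emod_lt_of_pos _ (by exact_mod_cast hNpos)⟩
    set t : Fin d → Fin N := fun i => ⟨(a i % (N:ℤ)).toNat, by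
      have h1 := (hmod i).1; have h2 := (hmod i).2; omega⟩ with htdef
    have hti : ∀ i, ((t i : ℕ) : ℤ) = a i % (N:ℤ) := by
      intro i
      show ((a i % (N:ℤ)).toNat : ℤ) = a i % (N:ℤ)
      exact Int.toNat_of_nonneg (hmod i).1
    set z : Fin d → ℤ := fun i => -(a i / (N:ℤ)) - zf (xt t) i with hz
    have hkey : ∀ i, corner t i = a i + (N:ℤ) * z i := by
      intro i
      show ((t i : ℕ) : ℤ) - (N:ℤ) * zf (xt t) i = a i + (N:ℤ) * z i
      rw [hti i, Int.emod_def, hz]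
      ring
    set y : Fin d → ℝ := x + fun i => ((z i : ℤ) : ℝ) with hy
    have hymem : y ∈ dyadicVoxel d ℓ (corner t) := by
      intro i
      have hfl : (a i : ℝ) ≤ 2^ℓ * x i := Int.floor_le _
      have hfu : (2:ℝ)^ℓ * x i < a i + 1 := Int.lt_floor_add_one _
      have hyi : y i = x i + (z i : ℝ) := rfl
      have hci : ((corner t i : ℤ) : ℝ) = (a i : ℝ) + 2^ℓ * (z i : ℝ) := by
        rw [hkey i]; push_cast [hNR]; ring
      constructor
      · rw [div_le_iff₀ h2ℓ, hci, hyi]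
        nlinarith
      · rw [lt_div_iff₀ h2ℓ, hci, hyi]
        nlinarith
    refine ⟨y, ⟨Set.mem_iUnion₂.2 ⟨(ℓ, corner t), Finset.mem_image.2 ⟨t, Finset.mem_univ t, rfl⟩, hymem⟩, z, rfl⟩, ?_⟩
    rintro y' ⟨hy'U, z', rfl⟩
    obtain ⟨p, hpS, hy'vox⟩ := Set.mem_iUnion₂.1 hy'U
    obtain ⟨t'', -, rfl⟩ := Finset.mem_image.1 hpS
    have hfloor' : ∀ i, corner t'' i = a i + (N:ℤ) * z' i := by
      intro i
      have h1 := (hy'vox i).1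
      have h2 := (hy'vox i).2
      rw [div_le_iff₀ h2ℓ] at h1
      rw [lt_div_iff₀ h2ℓ] at h2
      have hval : (2:ℝ)^ℓ * ((x + fun i => ((z' i : ℤ):ℝ)) i)
          = 2^ℓ * x i + (((N:ℤ) * z' i : ℤ):ℝ) := by
        show (2:ℝ)^ℓ * (x i + (z' i : ℝ)) = 2^ℓ * x i + (((N:ℤ) * z' i : ℤ) : ℝ)
        push_cast [hNR]
        ring
      have hai : ⌊(2:ℝ)^ℓ * x i⌋ = a i := rfl
      have hfl2 : (⌊(2:ℝ)^ℓ * ((x + fun i => ((z' i : ℤ):ℝ)) i)⌋ : ℤ) = a i + (N:ℤ) * z' i := by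
        rw [hval, Int.floor_add_intCast, hai]
      rw [← hfl2]
      symm
      apply Int.floor_eq_iff.2
      constructor
      · linarith
      · push_cast
        linarith
    have htt : t'' = t := by
      funext i
      have e0 : ((t'' i : ℕ):ℤ) - (N:ℤ) * zf (xt t'') i = a i + (N:ℤ) * z' i := hfloor' i
      have e1 : ((t'' i : ℕ):ℤ) = a i + (N:ℤ) * z' i + (N:ℤ) * zf (xt t'') i := by linarith
      have e2 : ((t'' i : ℕ):ℤ) % (N:ℤ) = a i % (N:ℤ) := by
        rw [e1, Int.add_mul_emod_self_left, Int.add_mul_emod_self_left]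
      have e3 : ((t'' i : ℕ):ℤ) % (N:ℤ) = ((t'' i : ℕ):ℤ) :=
        Int.emod_eq_of_lt (by positivity) (by exact_mod_cast (t'' i).isLt)
      have e4 := hti i
      have e5 : ((t'' i:ℕ):ℤ) = ((t i:ℕ):ℤ) := e3.symm.trans (e2.trans e4.symm)
      have hnat : (t'' i : ℕ) = (t i : ℕ) := by exact_mod_cast e5
      exact Fin.ext hnat
    have hzz : z' = z := by
      funext i
      have e0 := hfloor' i
      rw [htt] at e0
      have e1 := hkey i
      exact mul_left_cancel₀ hNZ (by linarith)
    rw [hzz]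
end
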